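/- Let (X,Q,H,Δ) be a reversible energy landscape satisfying the degenerate series Condition. For any state x ∉ {x₂, x₁¹,...,x₁ⁿ, x₀} with H(x) ≤ H(x₂), we have Φ(x, {x₁¹,...,x₁ⁿ, x₀}) - H(x) < Γ_m and Φ(x, x₂) - H(x₂) ≥ Γ_m. -/

import Mathlib

open Filter Topology
open scoped Classical

/-- Height along a path starting at `x` with subsequent states `l`. -/
def pathHeight {S : Type*} (H : S → ℝ) (Δ : S → S → ℝ) : S → List S → ℝ
  | x, [] => H x
  | x, y :: l => max (H x + Δ x y) (pathHeight H Δ y l)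

/-- Communication height between two states. -/
noncomputable def commHeight {S : Type*} (H : S → ℝ) (Δ : S → S → ℝ) (x y : S) : ℝ :=
  sInf {c | ∃ l : List S,
    (x :: l).getLast (List.cons_ne_nil x l) = y ∧ c = pathHeight H Δ x l}

/-- Communication height between a state and a set. -/
noncomputable def commSet {S : Type*} (H : S → ℝ) (Δ : S → S → ℝ) (x : S) (A : Set S) : ℝ :=
  sInf (commHeight H Δ x '' A)

/-- The states with energy strictly below that of `x`. -/
def Ibelow {S : Type*} (H : S → ℝ) (x : S) : Set S := {y | H y < H x}

/-- Stability level of a state. -/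
noncomputable def stabLevel {S : Type*} (H : S → ℝ) (Δ : S → S → ℝ) (x : S) : ℝ :=
  commSet H Δ x (Ibelow H x) - H x

/-- Ground states: global minima of the energy. -/
def stableSet {S : Type*} (H : S → ℝ) : Set S := {x | ∀ y, H x ≤ H y}

/-- Maximal stability level among non-stable states. -/
noncomputable def gammaM {S : Type*} (H : S → ℝ) (Δ : S → S → ℝ) : ℝ :=
  sSup (stabLevel H Δ '' (stableSet H)ᶜ)

/-- Metastable states: non-stable states attaining the maximal stability level. -/
def metaSet {S : Type*} (H : S → ℝ) (Δ : S → S → ℝ) : Set S :=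
  {x | x ∉ stableSet H ∧ stabLevel H Δ x = gammaM H Δ}

/-!
Every state that is neither stable nor metastable has stability level `< Γ_m`, so it reaches a
lower state through a path of height `< H x + Γ_m`. Descending in energy, a state `x ≠ x₂` with
`H x ≤ H x₂` thus reaches `{x₀, x₁¹, …, x₁ⁿ}` below `H x + Γ_m`. If `x` also reached `x₂` below
`H x₂ + Γ_m`, then by reversibility `x₂` would reach a state of `{x₀, x₁¹, …, x₁ⁿ}`, all of
lower energy, below `H x₂ + Γ_m`, contradicting the metastability of `x₂`.
-/

section EnergyLandscape

variable {S : Type*} (H : S → ℝ) (Δ : S → S → ℝ)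

def pathHeights (x y : S) : Set ℝ :=
  {c | ∃ l : List S, (x :: l).getLast (List.cons_ne_nil x l) = y ∧ c = pathHeight H Δ x l}

lemma pathHeight_mem_range (x : S) (l : List S) :
    pathHeight H Δ x l ∈ Set.range H ∪ Set.range (fun p : S × S => H p.1 + Δ p.1 p.2) := by
  induction l generalizing x with
  | nil => exact Or.inl ⟨x, rfl⟩
  | cons y l ih =>
    rcases max_choice (H x + Δ x y) (pathHeight H Δ y l) with h | h
    · rw [pathHeight, h]; exact Or.inr ⟨(x, y), rfl⟩
    · rw [pathHeight, h]; exact ih y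

lemma pathHeights_finite [Finite S] (x y : S) : (pathHeights H Δ x y).Finite :=
  ((Set.finite_range H).union (Set.finite_range _)).subset <| by
    rintro c ⟨l, -, rfl⟩
    exact pathHeight_mem_range H Δ x l

lemma pathHeights_nonempty (x y : S) : (pathHeights H Δ x y).Nonempty :=
  ⟨_, [y], rfl, rfl⟩

lemma exists_path_commHeight_eq [Finite S] (x y : S) :
    ∃ l : List S, (x :: l).getLast (List.cons_ne_nil x l) = y ∧
      commHeight H Δ x y = pathHeight H Δ x l :=
  (pathHeights_nonempty H Δ x y).csInf_mem (pathHeights_finite H Δ x y)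

lemma commHeight_le_pathHeight [Finite S] {x y : S} (l : List S)
    (hl : (x :: l).getLast (List.cons_ne_nil x l) = y) :
    commHeight H Δ x y ≤ pathHeight H Δ x l :=
  csInf_le (pathHeights_finite H Δ x y).bddBelow ⟨l, hl, rfl⟩

variable {H Δ}

lemma le_pathHeight (hΔ : ∀ x y, 0 ≤ Δ x y) (x : S) (l : List S) :
    H x ≤ pathHeight H Δ x l := by
  cases l with
  | nil => exact le_rfl
  | cons y l => exact le_max_of_le_left (le_add_of_nonneg_right (hΔ x y))

lemma pathHeight_append (hΔ : ∀ x y, 0 ≤ Δ x y) (x : S) (l m : List S) :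
    pathHeight H Δ x (l ++ m) =
      max (pathHeight H Δ x l) (pathHeight H Δ ((x :: l).getLast (List.cons_ne_nil x l)) m) := by
  induction l generalizing x with
  | nil => simp [pathHeight, le_pathHeight hΔ x m]
  | cons y l ih =>
    simp only [List.cons_append, pathHeight, ih y, max_assoc]
    rw [List.getLast_cons (List.cons_ne_nil y l)]

/-- In a reversible landscape a path can be run backwards at the same height. -/
lemma exists_reverse_path (hΔ : ∀ x y, 0 ≤ Δ x y) (hrev : ∀ x y, H x + Δ x y = H y + Δ y x)
    (x : S) (l : List S) :
    ∃ l' : List S,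
      ((x :: l).getLast (List.cons_ne_nil x l) :: l').getLast (List.cons_ne_nil _ _) = x ∧
      pathHeight H Δ ((x :: l).getLast (List.cons_ne_nil x l)) l' = pathHeight H Δ x l := by
  induction l generalizing x with
  | nil => exact ⟨[], rfl, rfl⟩
  | cons y l ih =>
    obtain ⟨l', hlast, hheight⟩ := ih y
    refine ⟨l' ++ [x], ?_, ?_⟩
    · rw [List.getLast_cons (List.cons_ne_nil y l)]
      exact List.getLast_append_singleton (_ :: l')
    · have hstep : pathHeight H Δ y [x] = H x + Δ x y := by
        rw [pathHeight, pathHeight, ← hrev x y]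
        exact max_eq_left (le_add_of_nonneg_right (hΔ x y))
      rw [List.getLast_cons (List.cons_ne_nil y l), pathHeight_append hΔ, hlast, hheight, hstep,
        pathHeight, max_comm]

lemma commHeight_comm [Finite S] (hΔ : ∀ x y, 0 ≤ Δ x y)
    (hrev : ∀ x y, H x + Δ x y = H y + Δ y x) (x y : S) :
    commHeight H Δ x y = commHeight H Δ y x := by
  have key : ∀ a b : S, commHeight H Δ b a ≤ commHeight H Δ a b := by
    intro a b
    obtain ⟨l, hl, heq⟩ := exists_path_commHeight_eq H Δ a b
    obtain ⟨l', hlast, hheight⟩ := exists_reverse_path hΔ hrev a l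
    rw [hl] at hlast hheight
    rw [heq, ← hheight]
    exact commHeight_le_pathHeight H Δ l' hlast
  exact le_antisymm (key y x) (key x y)

lemma commHeight_le_max [Finite S] (hΔ : ∀ x y, 0 ≤ Δ x y) (x y z : S) :
    commHeight H Δ x z ≤ max (commHeight H Δ x y) (commHeight H Δ y z) := by
  obtain ⟨l₁, hl₁, h₁⟩ := exists_path_commHeight_eq H Δ x y
  obtain ⟨l₂, hl₂, h₂⟩ := exists_path_commHeight_eq H Δ y z
  have hlast : (x :: (l₁ ++ l₂)).getLast (List.cons_ne_nil _ _) = z := by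
    rcases List.eq_nil_or_concat l₂ with rfl | ⟨m, w, rfl⟩
    · simpa [← hl₂] using hl₁
    · simpa [← List.append_assoc] using hl₂
  calc commHeight H Δ x z ≤ pathHeight H Δ x (l₁ ++ l₂) := commHeight_le_pathHeight H Δ _ hlast
    _ = _ := by rw [pathHeight_append hΔ, hl₁, h₁, h₂]

lemma exists_commSet_eq [Finite S] (x : S) {A : Set S} (hA : A.Nonempty) :
    ∃ a ∈ A, commSet H Δ x A = commHeight H Δ x a := by
  obtain ⟨a, ha, he⟩ := (hA.image (commHeight H Δ x)).csInf_mem (A.toFinite.image _)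
  exact ⟨a, ha, he.symm⟩

lemma commSet_le_commHeight [Finite S] (x : S) {A : Set S} {a : S} (ha : a ∈ A) :
    commSet H Δ x A ≤ commHeight H Δ x a :=
  csInf_le (A.toFinite.image _).bddBelow (Set.mem_image_of_mem _ ha)

lemma stabLevel_le_gammaM [Finite S] {x : S} (hx : x ∉ stableSet H) :
    stabLevel H Δ x ≤ gammaM H Δ :=
  le_csSup ((stableSet H)ᶜ.toFinite.image _).bddAbove (Set.mem_image_of_mem _ hx)

lemma exists_lt_of_notMem_stableSet {x : S} (hx : x ∉ stableSet H) : ∃ y, H y < H x := by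
  simpa [stableSet] using hx

lemma exists_commHeight_lt_of_notMem [Finite S] {x : S}
    (hx : x ∉ stableSet H ∪ metaSet H Δ) :
    ∃ y, H y < H x ∧ commHeight H Δ x y < H x + gammaM H Δ := by
  rw [Set.mem_union, not_or] at hx
  obtain ⟨hstable, hmeta⟩ := hx
  have hlt : stabLevel H Δ x < gammaM H Δ :=
    (stabLevel_le_gammaM hstable).lt_of_ne fun h => hmeta ⟨hstable, h⟩
  obtain ⟨y, hy, heq⟩ := exists_commSet_eq (A := Ibelow H x) x
    (exists_lt_of_notMem_stableSet hstable)
  refine ⟨y, hy, ?_⟩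
  rw [stabLevel, heq] at hlt
  linarith

lemma exists_mem_commHeight_lt [Finite S] (hΔ : ∀ x y, 0 ≤ Δ x y) {T : Set S} {x : S}
    (hx : x ∉ stableSet H ∪ metaSet H Δ)
    (hT : ∀ y, H y < H x → y ∈ stableSet H ∪ metaSet H Δ → y ∈ T) :
    ∃ t ∈ T, commHeight H Δ x t < H x + gammaM H Δ := by
  induction x using (Finite.wellFounded_of_trans_of_irrefl fun a b : S => H a < H b).induction
    with
  | _ x ih =>
    obtain ⟨y, hyx, hxy⟩ := exists_commHeight_lt_of_notMem hx
    by_cases hyT : y ∈ T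
    · exact ⟨y, hyT, hxy⟩
    obtain ⟨t, htT, hyt⟩ := ih y hyx (fun hy => hyT (hT y hyx hy))
      fun z hzy hz => hT z (hzy.trans hyx) hz
    refine ⟨t, htT, (commHeight_le_max hΔ x y t).trans_lt (max_lt hxy ?_)⟩
    linarith

lemma add_gammaM_le_commHeight_of_mem_metaSet [Finite S] (hΔ : ∀ x y, 0 ≤ Δ x y)
    (hrev : ∀ x y, H x + Δ x y = H y + Δ y x) {m x t : S} (hm : m ∈ metaSet H Δ)
    (ht : H t < H m) (hxt : commHeight H Δ x t < H m + gammaM H Δ) :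
    H m + gammaM H Δ ≤ commHeight H Δ x m := by
  by_contra! hxm
  have hmt : commHeight H Δ m t < H m + gammaM H Δ := by
    refine (commHeight_le_max hΔ m x t).trans_lt (max_lt ?_ hxt)
    rwa [commHeight_comm hΔ hrev]
  have hle : commSet H Δ m (Ibelow H m) ≤ commHeight H Δ m t := commSet_le_commHeight m ht
  have hlevel : stabLevel H Δ m = gammaM H Δ := hm.2
  rw [stabLevel] at hlevel
  linarith

end EnergyLandscape

theorem comm_bounds_below_x2_general {S : Type*} [Fintype S]
    (H : S → ℝ) (Δ : S → S → ℝ)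
    (hΔ : ∀ x y, 0 ≤ Δ x y) (hrev : ∀ x y, H x + Δ x y = H y + Δ y x)
    (n : ℕ) (x₀ x₂ : S) (x₁ : Fin n → S)
    (hS : stableSet H = {x₀})
    (hM : metaSet H Δ = insert x₂ (Set.range x₁))
    (hE2 : ∀ r, H (x₁ r) < H x₂)
    (x : S) (hx : x ∉ insert x₂ (insert x₀ (Set.range x₁)))
    (hHx : H x ≤ H x₂) :
    commSet H Δ x (insert x₀ (Set.range x₁)) - H x < gammaM H Δ ∧
    gammaM H Δ ≤ commHeight H Δ x x₂ - H x₂ := by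
  have hspecial : stableSet H ∪ metaSet H Δ = insert x₂ (insert x₀ (Set.range x₁)) := by
    rw [hS, hM, Set.singleton_union, Set.insert_comm]
  have hx₂ : x₂ ∈ metaSet H Δ := hM ▸ Set.mem_insert _ _
  obtain ⟨t, htT, hxt⟩ : ∃ t ∈ insert x₀ (Set.range x₁), commHeight H Δ x t < H x + gammaM H Δ :=
    exists_mem_commHeight_lt hΔ (hspecial ▸ hx) fun y hy hys => by
      rw [hspecial] at hys
      exact hys.resolve_left fun h => (h ▸ hy).not_ge hHx
  have ht : H t < H x₂ := by
    rcases htT with rfl | ⟨r, rfl⟩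
    · obtain ⟨y, hy⟩ := exists_lt_of_notMem_stableSet hx₂.1
      exact ((hS.symm ▸ rfl : t ∈ stableSet H) y).trans_lt hy
    · exact hE2 r
  have hcomm := commSet_le_commHeight (H := H) (Δ := Δ) x htT
  have hbarrier := add_gammaM_le_commHeight_of_mem_metaSet hΔ hrev hx₂ ht (by linarith)
  constructor <;> linarith

/-- For any state `x` outside `{x₂, x₁¹,…,x₁ⁿ, x₀}` with `H(x) ≤ H(x₂)`:
`Φ(x,{x₁¹,…,x₁ⁿ,x₀}) - H(x) < Γ_m` and `Φ(x,x₂) - H(x₂) ≥ Γ_m`. -/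
theorem comm_bounds_below_x2 {S : Type*} [Fintype S]
    (H : S → ℝ) (Δ : S → S → ℝ)
    (hΔ : ∀ x y, 0 ≤ Δ x y) (hrev : ∀ x y, H x + Δ x y = H y + Δ y x)
    (n : ℕ) (hn : 1 ≤ n) (x₀ x₂ : S) (x₁ : Fin n → S)
    (hinj : Function.Injective x₁)
    (hS : stableSet H = {x₀})
    (hM : metaSet H Δ = insert x₂ (Set.range x₁))
    (hE2 : ∀ r, H (x₁ r) < H x₂)
    (hEq : ∀ r q, H (x₁ r) = H (x₁ q))
    (hBar : ∀ r q, commHeight H Δ (x₁ r) (x₁ q) - H (x₁ r) < gammaM H Δ)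
    (x : S) (hx : x ∉ insert x₂ (insert x₀ (Set.range x₁)))
    (hHx : H x ≤ H x₂) :
    commSet H Δ x (insert x₀ (Set.range x₁)) - H x < gammaM H Δ ∧
    gammaM H Δ ≤ commHeight H Δ x x₂ - H x₂ :=
  comm_bounds_below_x2_general H Δ hΔ hrev n x₀ x₂ x₁ hS hM hE2 x hx hHx
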